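/- arXiv:1506.01068 — 2 statements merged into one kernel-verified Lean document; each statement's English description precedes it below -/
import Mathlib

section
/- If f = Σ*_{η<λ} (−1)^η f_η is the alternating sum of a decreasing transfinite sequence of non-negative bounded functions (f_η)_{η<λ} with λ even, then 0 ≤ f ≤ f₀ pointwise. -/
open Set Filter Topology

noncomputable section

/-- Oscillation of `f` at `x` restricted to `F`. -/
def osc {X : Type*} [TopologicalSpace X] (f : X → ℝ) (x : X) (F : Set X) : ENNReal :=
  ⨅ (U : Set X) (_ : IsOpen U) (_ : x ∈ U),
    ⨆ (y) (_ : y ∈ U ∩ F) (z) (_ : z ∈ U ∩ F), ENNReal.ofReal |f y - f z|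

/-- Oscillation derivative. -/
def oscDeriv {X : Type*} [TopologicalSpace X] (f : X → ℝ) (ε : ℝ) (F : Set X) : Set X :=
  {x ∈ F | ENNReal.ofReal ε ≤ osc f x F}

/-- Iterated derivatives of a set operation. -/
def iterD {X : Type*} (D : Set X → Set X) (F : Set X) (o : Ordinal.{0}) : Set X :=
  Ordinal.limitRecOn o F (fun _ ih => D ih) (fun o _ ih => ⋂ (η : Ordinal.{0}) (h : η < o), ih η h)

open Classical in
/-- Rank of a derivative: least `θ` with `D^θ(X) = ∅`, or `ω₁` if there is none. -/
def rkD {X : Type*} (D : Set X → Set X) : Ordinal.{0} :=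
  if ∃ θ, iterD D Set.univ θ = ∅ then sInf {θ | iterD D Set.univ θ = ∅}
  else (Cardinal.aleph 1).ord

/-- Oscillation rank. -/
def betaRank {X : Type*} [TopologicalSpace X] (f : X → ℝ) : Ordinal.{0} :=
  ⨆ ε : {ε : ℝ // 0 < ε}, rkD (oscDeriv f ε.1)

/-- Oscillation of a sequence of functions. -/
def oscSeq {X : Type*} [TopologicalSpace X] (f : ℕ → X → ℝ) (x : X) (F : Set X) : ENNReal :=
  ⨅ (U : Set X) (_ : IsOpen U) (_ : x ∈ U) (N : ℕ),
    ⨆ (m) (_ : N ≤ m) (n) (_ : N ≤ n) (y) (_ : y ∈ U ∩ F), ENNReal.ofReal |f m y - f n y|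

def oscSeqDeriv {X : Type*} [TopologicalSpace X] (f : ℕ → X → ℝ) (ε : ℝ) (F : Set X) : Set X :=
  {x ∈ F | ENNReal.ofReal ε ≤ oscSeq f x F}

/-- Convergence rank of a sequence. -/
def gammaRank {X : Type*} [TopologicalSpace X] (f : ℕ → X → ℝ) : Ordinal.{0} :=
  ⨆ ε : {ε : ℝ // 0 < ε}, rkD (oscSeqDeriv f ε.1)

/-- Alternating transfinite sum `Σ*_{η<θ} (−1)^η f_η`. -/
def altSum {X : Type*} (f : Ordinal.{0} → X → ℝ) (θ : Ordinal.{0}) : X → ℝ :=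
  Ordinal.limitRecOn θ (fun _ => 0)
    (fun η ih x => ih x + (if η % 2 = 0 then f η x else - f η x))
    (fun θ _ ih x => sSup {y | ∃ ζ, ∃ h : ζ < θ, ζ % 2 = 0 ∧ ih ζ h x = y})

/-- The `ξ`-th additive Borel class. -/
def Sigma0 {X : Type*} [TopologicalSpace X] (ξ : Ordinal.{0}) : Set (Set X) :=
  {s | IsOpen s} ∪
  {s | ∃ g : ℕ → Set X,
        (∀ n, ∃ η, ∃ _ : η < ξ, 1 ≤ η ∧ (g n)ᶜ ∈ Sigma0 η) ∧ s = ⋃ n, g n}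
termination_by ξ

/-- Baire class `ξ` functions. -/
def BaireClass {X : Type*} [TopologicalSpace X] (ξ : Ordinal.{0}) (f : X → ℝ) : Prop :=
  (ξ = 0 ∧ Continuous f) ∨
  (1 ≤ ξ ∧ ∃ g : ℕ → X → ℝ,
      (∀ n, ∃ η, ∃ _ : η < ξ, BaireClass η (g n)) ∧
      ∀ x, Tendsto (fun n => g n x) atTop (𝓝 (f x)))
termination_by ξ

/-!
Induct on `θ ≤ λ` with a parity-dependent invariant: even partial sums lie in `[0, f 0 - f θ]`,
odd ones in `[f θ, f 0]`. A successor step adds or subtracts `f θ` and only needs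
`f (θ + 1) ≤ f θ`. Limits are even, and every even partial sum below a limit `θ` is at most
`f 0 - f ζ ≤ f 0 - f θ`, while the one at `0` is `0`; so the supremum stays in range.
Non-negativity of `f λ` then turns `altSum f λ + f λ ≤ f 0` into the claim.
-/

namespace Ordinal

theorem mod_two_eq_zero_or_one (a : Ordinal) : a % 2 = 0 ∨ a % 2 = 1 := by
  have h : a % 2 < 1 + 1 := by rw [one_add_one_eq_two]; exact mod_lt a two_ne_zero
  exact Order.le_one_iff.1 (Order.lt_add_one_iff.1 h)

theorem add_one_mod_two (a : Ordinal) : (a + 1) % 2 = (a % 2 + 1) % 2 := by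
  conv_lhs => rw [← div_add_mod a 2, add_assoc, mul_add_mod_self]

theorem add_one_mod_two_of_mod_two_eq_zero {a : Ordinal} (h : a % 2 = 0) : (a + 1) % 2 = 1 := by
  rw [add_one_mod_two, h, zero_add, mod_eq_of_lt one_lt_two]

theorem add_one_mod_two_of_mod_two_eq_one {a : Ordinal} (h : a % 2 = 1) : (a + 1) % 2 = 0 := by
  rw [add_one_mod_two, h, one_add_one_eq_two, mod_self]

theorem mod_two_eq_zero_of_isSuccLimit {a : Ordinal} (h : Order.IsSuccLimit a) : a % 2 = 0 :=
  mod_eq_zero_of_dvd <| dvd_trans ⟨ω, (natCast_mul_omega0 two_pos).symm⟩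
    (isSuccPrelimit_iff_omega0_dvd.1 h.isSuccPrelimit)

end Ordinal

section altSum

variable {X : Type*} (f : Ordinal.{0} → X → ℝ)

theorem altSum_zero : altSum f 0 = 0 := by
  rw [altSum, Ordinal.limitRecOn_zero]
  rfl

theorem altSum_add_one (η : Ordinal.{0}) (x : X) :
    altSum f (η + 1) x = altSum f η x + if η % 2 = 0 then f η x else -f η x := by
  rw [altSum, Ordinal.limitRecOn_add_one]
  rfl

theorem altSum_of_isSuccLimit {θ : Ordinal.{0}} (hθ : Order.IsSuccLimit θ) (x : X) :
    altSum f θ x = sSup ((altSum f · x) '' {ζ | ζ < θ ∧ ζ % 2 = 0}) := by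
  rw [altSum, Ordinal.limitRecOn_limit _ _ _ _ hθ]
  congr 1
  ext y
  exact ⟨fun ⟨ζ, hζθ, hζ, h⟩ => ⟨ζ, ⟨hζθ, hζ⟩, h⟩, fun ⟨ζ, ⟨hζθ, hζ⟩, h⟩ => ⟨ζ, hζθ, hζ, h⟩⟩

theorem altSum_bounds {lam : Ordinal.{0}} {x : X}
    (hmono : ∀ η ζ : Ordinal.{0}, η ≤ ζ → ζ ≤ lam → f ζ x ≤ f η x) :
    ∀ θ ≤ lam, if θ % 2 = 0 then 0 ≤ altSum f θ x ∧ altSum f θ x + f θ x ≤ f 0 x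
      else f θ x ≤ altSum f θ x ∧ altSum f θ x ≤ f 0 x := by
  intro θ
  induction θ using Ordinal.limitRecOn with
  | zero => simp [altSum_zero]
  | add_one ζ ih =>
    intro hζlam
    have ih := ih (le_self_add.trans hζlam)
    have hstep : f (ζ + 1) x ≤ f ζ x := hmono ζ (ζ + 1) le_self_add hζlam
    rw [altSum_add_one]
    rcases Ordinal.mod_two_eq_zero_or_one ζ with hζ | hζ
    · rw [if_pos hζ] at ih
      rw [Ordinal.add_one_mod_two_of_mod_two_eq_zero hζ, if_neg one_ne_zero, if_pos hζ]
      constructor <;> linarith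
    · rw [if_neg (hζ ▸ one_ne_zero)] at ih
      rw [Ordinal.add_one_mod_two_of_mod_two_eq_one hζ, if_pos rfl, if_neg (hζ ▸ one_ne_zero)]
      constructor <;> linarith
  | limit θ hθ ih =>
    intro hθlam
    rw [if_pos (Ordinal.mod_two_eq_zero_of_isSuccLimit hθ), altSum_of_isSuccLimit f hθ]
    have hzero : (0 : Ordinal) ∈ {ζ | ζ < θ ∧ ζ % 2 = 0} := ⟨hθ.bot_lt, Ordinal.zero_mod 2⟩
    have hle : ∀ ζ ∈ {ζ | ζ < θ ∧ ζ % 2 = 0}, altSum f ζ x ≤ f 0 x - f θ x := by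
      rintro ζ ⟨hζθ, hζ⟩
      have := ih ζ hζθ (hζθ.le.trans hθlam)
      rw [if_pos hζ] at this
      linarith [hmono ζ θ hζθ.le hθlam]
    have hbdd : BddAbove ((altSum f · x) '' {ζ | ζ < θ ∧ ζ % 2 = 0}) :=
      ⟨_, Set.forall_mem_image.2 hle⟩
    constructor
    · simpa [altSum_zero] using le_csSup hbdd (Set.mem_image_of_mem _ hzero)
    · linarith [csSup_le (Set.image_nonempty.2 ⟨0, hzero⟩) (Set.forall_mem_image.2 hle)]

end altSum

theorem stmt10_general {X : Type*} (lam : Ordinal.{0}) (f : Ordinal.{0} → X → ℝ)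
    (hmono : ∀ η ζ : Ordinal.{0}, η ≤ ζ → ζ ≤ lam → ∀ x, f ζ x ≤ f η x)
    (hnn : ∀ η : Ordinal.{0}, η ≤ lam → ∀ x, 0 ≤ f η x)
    (hlam : lam % 2 = 0) (x : X) :
    0 ≤ altSum f lam x ∧ altSum f lam x ≤ f 0 x := by
  have h := altSum_bounds f (fun η ζ h h' => hmono η ζ h h' x) lam le_rfl
  rw [if_pos hlam] at h
  exact ⟨h.1, by linarith [hnn lam le_rfl x]⟩

theorem stmt10 {X : Type*} (lam : Ordinal.{0}) (f : Ordinal.{0} → X → ℝ)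
    (hmono : ∀ η ζ : Ordinal.{0}, η ≤ ζ → ζ ≤ lam → ∀ x, f ζ x ≤ f η x)
    (hnn : ∀ η : Ordinal.{0}, η ≤ lam → ∀ x, 0 ≤ f η x)
    (hbd : ∀ η : Ordinal.{0}, η ≤ lam → ∃ M, ∀ x, |f η x| ≤ M)
    (hlam : lam % 2 = 0) (x : X) :
    0 ≤ altSum f lam x ∧ altSum f lam x ≤ f 0 x :=
  stmt10_general lam f hmono hnn hlam x

end
end

section
/- If a sequence (f_n) of functions on a Polish space converges pointwise to a bounded function f, each f_n satisfies β(f_n) ≤ ω^λ, and the convergence is pseudouniform (i.e., γ((f_n)) ≤ ω), then β(f) ≤ ω^{λ+1}. -/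
open Set Filter Topology

noncomputable section

/-!
Fix `ε > 0` and put `δ = ε / 3`. Pseudouniform convergence says that the derivative
`D = D_{(f_n),δ}` empties out after `ω` steps, so `⋂ₖ Dᵏ(X) = ∅`. We show by induction on `k`
that `D_{f,ε}^{ω^λ·k}(X) ⊆ Dᵏ(X)`. Let `A = D_{f,ε}^{ω^λ·k}(X) ⊆ Dᵏ(X)`. If a point `x` of
`D_{f,ε}^{ω^λ}(A)` were not in `Dᵏ⁺¹(X)`, some `f_N` would be `δ`-close to `f` on `U ∩ Dᵏ(X)` for
a neighbourhood `U` of `x`. Oscillation `ε` of `f` then forces oscillation `ε - 2δ = δ` of `f_N`,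
so `D_{f,ε}^θ(A) ∩ U ⊆ D_{f_N,δ}^θ(X)` for all `θ`, and the right side is empty at `θ = ω^λ`.
Hence `D_{f,ε}^{ω^λ·ω}(X) = ∅`. When `ω^λ ≥ ω₁` the bound is automatic: in a second countable
space a decreasing transfinite sequence of closed sets stabilizes at a countable stage.
-/

open Set Filter Topology Ordinal

section IterD

variable {X : Type*} {D : Set X → Set X}

theorem iterD_zero (D : Set X → Set X) (F : Set X) : iterD D F 0 = F :=
  limitRecOn_zero _ _ _

theorem iterD_succ (D : Set X → Set X) (F : Set X) (o : Ordinal) :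
    iterD D F (o + 1) = D (iterD D F o) := by
  rw [iterD, limitRecOn_add_one]
  rfl

theorem iterD_limit (D : Set X → Set X) (F : Set X) {o : Ordinal} (h : Order.IsSuccLimit o) :
    iterD D F o = ⋂ (η : Ordinal) (_ : η < o), iterD D F η := by
  rw [iterD, limitRecOn_limit _ _ _ _ h]
  rfl

theorem iterD_antitone (hD : ∀ F, D F ⊆ F) (F : Set X) : Antitone (iterD D F) := by
  intro a b
  induction b using limitRecOn with
  | zero => intro h; rw [nonpos_iff_eq_zero.1 h]
  | add_one b ih =>
    intro h
    rcases Order.le_succ_iff_eq_or_le.1 h with h | h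
    · rw [h, Order.succ_eq_add_one]
    · rw [iterD_succ]
      exact (hD _).trans (ih h)
  | limit b hb ih =>
    intro h
    rcases eq_or_lt_of_le h with h | h
    · rw [h]
    · rw [iterD_limit D F hb]
      exact iInter₂_subset a h

theorem iterD_subset (hD : ∀ F, D F ⊆ F) (F : Set X) (o : Ordinal) : iterD D F o ⊆ F := by
  simpa only [iterD_zero] using iterD_antitone hD F (zero_le : 0 ≤ o)

theorem iterD_mono (hm : Monotone D) {F G : Set X} (h : F ⊆ G) (o : Ordinal) :
    iterD D F o ⊆ iterD D G o := by
  induction o using limitRecOn with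
  | zero => rwa [iterD_zero, iterD_zero]
  | add_one o ih => rw [iterD_succ, iterD_succ]; exact hm ih
  | limit o ho ih =>
    rw [iterD_limit D F ho, iterD_limit D G ho]
    exact iInter₂_mono ih

theorem iterD_add (hD : ∀ F, D F ⊆ F) (F : Set X) (a b : Ordinal) :
    iterD D F (a + b) = iterD D (iterD D F a) b := by
  induction b using limitRecOn with
  | zero => rw [add_zero, iterD_zero]
  | add_one b ih => rw [← add_assoc, iterD_succ, iterD_succ, ih]
  | limit b hb ih =>
    rw [iterD_limit D F (isSuccLimit_add a hb), iterD_limit _ _ hb]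
    refine Subset.antisymm (fun x hx => mem_iInter₂.2 fun ζ hζ => ?_) fun x hx => ?_
    · rw [← ih ζ hζ]
      exact mem_iInter₂.1 hx (a + ζ) ((add_lt_add_iff_left a).2 hζ)
    · refine mem_iInter₂.2 fun η hη => ?_
      rcases le_or_gt η a with h | h
      · have hx0 := mem_iInter₂.1 hx 0 hb.pos
        rw [iterD_zero] at hx0
        exact iterD_antitone hD F h hx0
      · have hζb : η - a < b := sub_lt_of_lt_add hη hb.pos
        have hxζ := mem_iInter₂.1 hx (η - a) hζb
        rwa [← ih _ hζb, Ordinal.add_sub_cancel_of_le h.le] at hxζ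

theorem iterD_eq_self_of_map_eq {F : Set X} (hF : D F = F) (o : Ordinal) : iterD D F o = F := by
  induction o using limitRecOn with
  | zero => exact iterD_zero D F
  | add_one o ih => rw [iterD_succ, ih, hF]
  | limit o ho ih =>
    rw [iterD_limit D F ho]
    refine Subset.antisymm (fun x hx => ?_) fun x hx => mem_iInter₂.2 fun η hη => ?_
    · simpa only [ih 0 ho.pos] using mem_iInter₂.1 hx 0 ho.pos
    · rwa [ih η hη]

theorem iterD_eq_of_succ_eq (hD : ∀ F, D F ⊆ F) {F : Set X} {θ o : Ordinal}
    (h : iterD D F (θ + 1) = iterD D F θ) (hθo : θ ≤ o) : iterD D F o = iterD D F θ := by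
  rw [iterD_succ] at h
  rw [← Ordinal.add_sub_cancel_of_le hθo, iterD_add hD, iterD_eq_self_of_map_eq h]

end IterD

section Rank

variable {X : Type*} {D : Set X → Set X}

theorem rkD_le_of_iterD_eq_empty {θ : Ordinal} (h : iterD D univ θ = ∅) : rkD D ≤ θ := by
  classical
  rw [rkD, if_pos ⟨θ, h⟩]
  exact csInf_le (OrderBot.bddBelow _) h

/-- Below `ω₁` the rank cannot be the default value of `rkD`, so it is attained. -/
theorem iterD_eq_empty_of_rkD_le (hD : ∀ F, D F ⊆ F) {c : Ordinal}
    (hc : c < (Cardinal.aleph 1).ord) (h : rkD D ≤ c) : iterD D univ c = ∅ := by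
  classical
  rw [rkD] at h
  split_ifs at h with hex
  · exact subset_empty_iff.1 (csInf_mem hex ▸ iterD_antitone hD _ h)
  · exact absurd (h.trans_lt hc) (lt_irrefl _)

theorem omega0_lt_ord_aleph_one : ω < (Cardinal.aleph 1).ord := by
  rw [Cardinal.ord_aleph]
  exact omega0_lt_omega_one

/-- Each strict step of the sequence is witnessed by a distinct element of a countable basis. -/
theorem lt_ord_aleph_one_of_succ_ne [TopologicalSpace X] [SecondCountableTopology X]
    {s : Ordinal.{0} → Set X} (hs : Antitone s) (hclosed : ∀ θ, IsClosed (s θ)) {o : Ordinal.{0}}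
    (hne : ∀ θ < o, s (θ + 1) ≠ s θ) : o < (Cardinal.aleph 1).ord := by
  open TopologicalSpace in
  have hsep : ∀ θ : Iio o, ∃ U ∈ countableBasis X, (U ∩ s θ).Nonempty ∧ U ∩ s (θ + 1) = ∅ := by
    rintro ⟨θ, hθ⟩
    obtain ⟨x, hxθ, hx⟩ := exists_of_ssubset ((hs le_self_add).ssubset_of_ne (hne θ hθ))
    obtain ⟨U, hU, hxU, hUs⟩ :=
      (isBasis_countableBasis X).exists_subset_of_mem_open hx (hclosed _).isOpen_compl
    exact ⟨U, hU, ⟨x, hxU, hxθ⟩, subset_compl_iff_disjoint_right.1 hUs |>.inter_eq⟩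
  choose U hU hmeet hdisj using hsep
  have hinj : Function.Injective fun θ => (⟨U θ, hU θ⟩ : countableBasis X) := by
    refine Function.Injective.of_lt_imp_ne fun a b hab heq => ?_
    obtain ⟨y, hyU, hys⟩ := hmeet b
    have hya : y ∈ U a ∩ s (a + 1) :=
      ⟨by rwa [show U a = U b from congrArg Subtype.val heq], hs (Order.add_one_le_of_lt hab) hys⟩
    rwa [hdisj a] at hya
  have : Countable (countableBasis X) := (countable_countableBasis X).to_subtype
  have hcount := Cardinal.mk_le_aleph0_iff.2 hinj.countable
  rw [Cardinal.mk_Iio_ordinal, Cardinal.lift_le_aleph0] at hcount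
  exact Cardinal.lt_ord.2 (hcount.trans_lt Cardinal.aleph0_lt_aleph_one)

theorem rkD_le_ord_aleph_one [TopologicalSpace X] [SecondCountableTopology X]
    (hD : ∀ F, D F ⊆ F) (hclosed : ∀ θ, IsClosed (iterD D univ θ)) :
    rkD D ≤ (Cardinal.aleph 1).ord := by
  classical
  by_cases hex : ∃ θ, iterD D univ θ = ∅
  · have hne : {θ | iterD D univ θ = ∅}.Nonempty := hex
    rw [rkD, if_pos hex]
    refine (lt_ord_aleph_one_of_succ_ne (iterD_antitone hD univ) hclosed fun θ hθ hstable => ?_).le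
    have hθempty : iterD D univ θ = ∅ := by
      rw [← iterD_eq_of_succ_eq hD hstable hθ.le, csInf_mem hne]
    exact notMem_of_lt_csInf hθ (OrderBot.bddBelow _) hθempty
  · rw [rkD, if_neg hex]

end Rank

section Oscillation

variable {X : Type*} [TopologicalSpace X]

theorem osc_mono (f : X → ℝ) (x : X) {F G : Set X} (h : F ⊆ G) : osc f x F ≤ osc f x G :=
  iInf₂_mono fun _ _ => iInf_mono fun _ => iSup₂_le fun y hy => iSup₂_le fun z hz =>
    le_iSup₂_of_le y ⟨hy.1, h hy.2⟩ (le_iSup₂_of_le z ⟨hz.1, h hz.2⟩ le_rfl)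

theorem osc_le_osc_inter (f : X → ℝ) {x : X} {U : Set X} (hU : IsOpen U) (hx : x ∈ U)
    (F : Set X) : osc f x F ≤ osc f x (F ∩ U) := by
  refine le_iInf₂ fun V hV => le_iInf fun hxV => ?_
  refine iInf_le_of_le (V ∩ U) <| iInf_le_of_le (hV.inter hU) <| iInf_le_of_le ⟨hxV, hx⟩ ?_
  rw [inter_assoc, inter_comm U F]

theorem osc_le_osc_add {f g : X → ℝ} {x : X} {F : Set X} {δ : ℝ}
    (hfg : ∀ y ∈ F, |f y - g y| ≤ δ) : osc f x F ≤ osc g x F + ENNReal.ofReal (2 * δ) := by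
  simp only [osc, ENNReal.iInf_add]
  refine iInf₂_mono fun U _ => iInf_mono fun _ => iSup₂_le fun y hy => iSup₂_le fun z hz => ?_
  have hfgy := abs_le.1 (hfg y hy.2)
  have hfgz := abs_le.1 (hfg z hz.2)
  calc ENNReal.ofReal |f y - f z| ≤ ENNReal.ofReal (|g y - g z| + 2 * δ) := by
        refine ENNReal.ofReal_le_ofReal (abs_le.2 ⟨?_, ?_⟩) <;>
          linarith [le_abs_self (g y - g z), neg_abs_le (g y - g z)]
    _ ≤ ENNReal.ofReal |g y - g z| + ENNReal.ofReal (2 * δ) := ENNReal.ofReal_add_le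
    _ ≤ _ := by gcongr; exact le_iSup₂_of_le y hy (le_iSup₂_of_le z hz le_rfl)

theorem isClosed_setOf_le_osc (f : X → ℝ) (F : Set X) (c : ENNReal) :
    IsClosed {x | c ≤ osc f x F} := by
  refine isOpen_compl_iff.1 (isOpen_iff_forall_mem_open.2 fun x hx => ?_)
  simp only [mem_compl_iff, mem_ofPred_eq, not_le, osc, iInf_lt_iff] at hx
  obtain ⟨U, hU, hxU, hlt⟩ := hx
  refine ⟨U, fun y hy => ?_, hU, hxU⟩
  simp only [mem_compl_iff, mem_ofPred_eq, not_le, osc, iInf_lt_iff]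
  exact ⟨U, hU, hy, hlt⟩

theorem oscDeriv_subset (f : X → ℝ) (ε : ℝ) (F : Set X) : oscDeriv f ε F ⊆ F :=
  fun _ hx => hx.1

theorem oscDeriv_mono (f : X → ℝ) (ε : ℝ) : Monotone (oscDeriv f ε) :=
  fun _ _ h _ hx => ⟨h hx.1, hx.2.trans (osc_mono f _ h)⟩

theorem isClosed_iterD_oscDeriv (f : X → ℝ) (ε : ℝ) {F : Set X} (hF : IsClosed F)
    (o : Ordinal) : IsClosed (iterD (oscDeriv f ε) F o) := by
  induction o using limitRecOn with
  | zero => rwa [iterD_zero]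
  | add_one o ih => rw [iterD_succ]; exact ih.inter (isClosed_setOf_le_osc f _ _)
  | limit o ho ih =>
    rw [iterD_limit _ F ho]
    exact isClosed_biInter ih

theorem rkD_oscDeriv_le_ord_aleph_one [SecondCountableTopology X] (f : X → ℝ) (ε : ℝ) :
    rkD (oscDeriv f ε) ≤ (Cardinal.aleph 1).ord :=
  rkD_le_ord_aleph_one (oscDeriv_subset f ε) (isClosed_iterD_oscDeriv f ε isClosed_univ)

theorem rkD_oscDeriv_le_betaRank (f : X → ℝ) {ε : ℝ} (hε : 0 < ε) :
    rkD (oscDeriv f ε) ≤ betaRank f :=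
  le_ciSup bddAbove_of_small (⟨ε, hε⟩ : {ε : ℝ // 0 < ε})

theorem iterD_oscDeriv_inter_subset {f g : X → ℝ} {ε ε' δ : ℝ} (hδ : 0 ≤ δ)
    (hεδ : ε' + 2 * δ ≤ ε) {A U : Set X} (hU : IsOpen U)
    (hfg : ∀ y ∈ A ∩ U, |f y - g y| ≤ δ) (θ : Ordinal) :
    iterD (oscDeriv f ε) A θ ∩ U ⊆ iterD (oscDeriv g ε') A θ := by
  induction θ using limitRecOn with
  | zero => simpa only [iterD_zero] using inter_subset_left
  | add_one θ ih =>
    rw [iterD_succ, iterD_succ]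
    rintro x ⟨⟨hxA, hxosc⟩, hxU⟩
    refine ⟨ih ⟨hxA, hxU⟩, ?_⟩
    have hfgθ : ∀ y ∈ iterD (oscDeriv f ε) A θ ∩ U, |f y - g y| ≤ δ := fun y hy =>
      hfg y ⟨iterD_subset (oscDeriv_subset f ε) A θ hy.1, hy.2⟩
    have hosc : ENNReal.ofReal ε ≤
        osc g x (iterD (oscDeriv g ε') A θ) + ENNReal.ofReal (2 * δ) :=
      calc ENNReal.ofReal ε ≤ osc f x (iterD (oscDeriv f ε) A θ ∩ U) :=
            hxosc.trans (osc_le_osc_inter f hU hxU _)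
        _ ≤ osc g x (iterD (oscDeriv f ε) A θ ∩ U) + ENNReal.ofReal (2 * δ) :=
            osc_le_osc_add hfgθ
        _ ≤ _ := by gcongr; exact osc_mono g x ih
    calc ENNReal.ofReal ε' ≤ ENNReal.ofReal (ε - 2 * δ) := ENNReal.ofReal_le_ofReal (by linarith)
      _ = ENNReal.ofReal ε - ENNReal.ofReal (2 * δ) := ENNReal.ofReal_sub _ (by positivity)
      _ ≤ _ := tsub_le_iff_right.2 hosc
  | limit θ hθ ih =>
    rw [iterD_limit _ _ hθ, iterD_limit _ _ hθ]
    rintro x ⟨hx, hxU⟩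
    exact mem_iInter₂.2 fun η hη => ih η hη ⟨mem_iInter₂.1 hx η hη, hxU⟩

theorem oscSeqDeriv_subset (fseq : ℕ → X → ℝ) (ε : ℝ) (F : Set X) : oscSeqDeriv fseq ε F ⊆ F :=
  fun _ hx => hx.1

theorem rkD_oscSeqDeriv_le_gammaRank (fseq : ℕ → X → ℝ) {ε : ℝ} (hε : 0 < ε) :
    rkD (oscSeqDeriv fseq ε) ≤ gammaRank fseq :=
  le_ciSup bddAbove_of_small (⟨ε, hε⟩ : {ε : ℝ // 0 < ε})

end Oscillation

section Convergence

variable {X : Type*} [TopologicalSpace X] {fseq : ℕ → X → ℝ} {f : X → ℝ}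

theorem exists_abs_sub_le_of_oscSeq_lt (hconv : ∀ x, Tendsto (fun n => fseq n x) atTop (𝓝 (f x)))
    {x : X} {F : Set X} {δ : ℝ} (h : oscSeq fseq x F < ENNReal.ofReal δ) :
    ∃ U, IsOpen U ∧ x ∈ U ∧ ∃ N, ∀ y ∈ U ∩ F, |f y - fseq N y| ≤ δ := by
  simp only [oscSeq, iInf_lt_iff] at h
  obtain ⟨U, hU, hxU, N, hN⟩ := h
  refine ⟨U, hU, hxU, N, fun y hy => ?_⟩
  have hclose : ∀ m ≥ N, |fseq m y - fseq N y| ≤ δ := fun m hm =>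
    (ENNReal.ofReal_lt_ofReal_iff'.1 <| lt_of_le_of_lt
      (le_iSup₂_of_le m hm <| le_iSup₂_of_le N le_rfl <|
        le_iSup₂ (f := fun y (_ : y ∈ U ∩ F) => ENNReal.ofReal |fseq m y - fseq N y|) y hy) hN).1.le
  exact le_of_tendsto ((hconv y).sub_const _).abs (eventually_atTop.2 ⟨N, hclose⟩)

variable (hconv : ∀ x, Tendsto (fun n => fseq n x) atTop (𝓝 (f x))) {ε δ : ℝ} (hδ : 0 ≤ δ)
  (hεδ : 3 * δ ≤ ε) {α : Ordinal} (hα : ∀ n, iterD (oscDeriv (fseq n) δ) univ α = ∅)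
include hconv hδ hεδ hα

theorem iterD_oscDeriv_subset_oscSeqDeriv {A G : Set X} (hAG : A ⊆ G) :
    iterD (oscDeriv f ε) A α ⊆ oscSeqDeriv fseq δ G := by
  intro x hx
  refine ⟨hAG (iterD_subset (oscDeriv_subset f ε) A α hx), not_lt.1 fun hlt => ?_⟩
  obtain ⟨U, hU, hxU, N, hN⟩ := exists_abs_sub_le_of_oscSeq_lt hconv hlt
  have hxN : x ∈ iterD (oscDeriv (fseq N) δ) A α :=
    iterD_oscDeriv_inter_subset hδ (by linarith) hU (fun y hy => hN y ⟨hy.2, hAG hy.1⟩) α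
      ⟨hx, hxU⟩
  have := iterD_mono (oscDeriv_mono (fseq N) δ) (subset_univ A) α hxN
  rwa [hα N] at this

theorem iterD_oscDeriv_mul_nat_subset (k : ℕ) :
    iterD (oscDeriv f ε) univ (α * k) ⊆ iterD (oscSeqDeriv fseq δ) univ k := by
  induction k with
  | zero => simp only [Nat.cast_zero, mul_zero, iterD_zero, subset_univ]
  | succ k ih =>
    rw [Nat.cast_succ, mul_add_one, iterD_add (oscDeriv_subset f ε), iterD_succ]
    exact iterD_oscDeriv_subset_oscSeqDeriv hconv hδ hεδ hα ih

theorem iterD_oscDeriv_mul_omega0_subset :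
    iterD (oscDeriv f ε) univ (α * ω) ⊆ iterD (oscSeqDeriv fseq δ) univ ω := by
  intro x hx
  rw [iterD_limit _ _ isSuccLimit_omega0]
  refine mem_iInter₂.2 fun η hη => ?_
  obtain ⟨k, rfl⟩ := lt_omega0.1 hη
  refine iterD_oscDeriv_mul_nat_subset hconv hδ hεδ hα k ?_
  have hk : α * k ≤ α * ω := by gcongr
  exact iterD_antitone (oscDeriv_subset f ε) univ hk hx

end Convergence

theorem rkD_oscDeriv_le_mul_omega0 {X : Type*} [TopologicalSpace X] {fseq : ℕ → X → ℝ}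
    {f : X → ℝ} (hconv : ∀ x, Tendsto (fun n => fseq n x) atTop (𝓝 (f x))) {ε δ : ℝ}
    (hδ : 0 ≤ δ) (hεδ : 3 * δ ≤ ε) {α : Ordinal} (hα : α < (Cardinal.aleph 1).ord)
    (hβ : ∀ n, rkD (oscDeriv (fseq n) δ) ≤ α) (hγ : rkD (oscSeqDeriv fseq δ) ≤ ω) :
    rkD (oscDeriv f ε) ≤ α * ω := by
  refine rkD_le_of_iterD_eq_empty (subset_empty_iff.1 ?_)
  rw [← iterD_eq_empty_of_rkD_le (oscSeqDeriv_subset fseq δ) omega0_lt_ord_aleph_one hγ]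
  exact iterD_oscDeriv_mul_omega0_subset hconv hδ hεδ
    fun n => iterD_eq_empty_of_rkD_le (oscDeriv_subset _ δ) hα (hβ n)

theorem stmt14_general {X : Type*} [TopologicalSpace X] [PolishSpace X]
    (fseq : ℕ → X → ℝ) (f : X → ℝ)
    (hconv : ∀ x, Tendsto (fun n => fseq n x) atTop (𝓝 (f x)))
    (lam : Ordinal.{0})
    (hβ : ∀ n, betaRank (fseq n) ≤ Ordinal.omega0 ^ lam)
    (hγ : gammaRank fseq ≤ Ordinal.omega0) :
    betaRank f ≤ Ordinal.omega0 ^ (lam + 1) := by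
  refine Ordinal.iSup_le fun ⟨ε, hε⟩ => ?_
  rcases lt_or_ge (ω ^ lam) (Cardinal.aleph 1).ord with hlt | hge
  · have hδ : 0 < ε / 3 := by positivity
    rw [opow_add_one]
    exact rkD_oscDeriv_le_mul_omega0 hconv hδ.le (by linarith) hlt
      (fun n => (rkD_oscDeriv_le_betaRank _ hδ).trans (hβ n))
      ((rkD_oscSeqDeriv_le_gammaRank _ hδ).trans hγ)
  · exact (rkD_oscDeriv_le_ord_aleph_one f ε).trans
      (hge.trans (opow_le_opow_right omega0_pos le_self_add))

theorem stmt14 {X : Type*} [TopologicalSpace X] [PolishSpace X]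
    (fseq : ℕ → X → ℝ) (f : X → ℝ)
    (hconv : ∀ x, Tendsto (fun n => fseq n x) atTop (𝓝 (f x)))
    (hbd : ∃ M, ∀ x, |f x| ≤ M)
    (lam : Ordinal.{0})
    (hβ : ∀ n, betaRank (fseq n) ≤ Ordinal.omega0 ^ lam)
    (hγ : gammaRank fseq ≤ Ordinal.omega0) :
    betaRank f ≤ Ordinal.omega0 ^ (lam + 1) :=
  stmt14_general fseq f hconv lam hβ hγ
end
end
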